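/- arXiv:math/0205179 — 2 statements merged into one kernel-verified Lean document; each statement's English description precedes it below -/
import Mathlib

section
/- A subset I ⊆ Φ₊ of the positive roots of a finite crystallographic root system is the inversion set I(w) of some Weyl group element w if and only if there exists a linear functional h on the ambient vector space such that I = {α ∈ Φ₊ : h(α) > 0} and Φ₊ \ I = {α ∈ Φ₊ : h(α) < 0}. -/
open scoped RealInnerProductSpace

variable {V : Type*} [NormedAddCommGroup V] [InnerProductSpace ℝ V] [FiniteDimensional ℝ V]

/-- The reflection in the hyperplane orthogonal to `α`. -/
noncomputable def rootReflection (α : V) : V ≃ₗᵢ[ℝ] V := Submodule.reflection (ℝ ∙ α)ᗮ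

/-- A finite crystallographic (reduced) root system in `V`. -/
structure IsRootSystem (Φ : Set V) : Prop where
  finite : Φ.Finite
  ne_zero : ∀ α ∈ Φ, α ≠ 0
  reflect_mem : ∀ α ∈ Φ, ∀ β ∈ Φ, rootReflection α β ∈ Φ
  crystal : ∀ α ∈ Φ, ∀ β ∈ Φ, ∃ k : ℤ, 2 * ⟪β, α⟫ / ⟪α, α⟫ = (k : ℝ)
  reduced : ∀ α ∈ Φ, ∀ t : ℝ, t • α ∈ Φ → t = 1 ∨ t = -1

/-- `P` is a system of positive roots for `Φ`, cut out by a linear functional. -/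
def IsPositiveSystem (Φ P : Set V) : Prop :=
  ∃ h : V →ₗ[ℝ] ℝ, (∀ α ∈ Φ, h α ≠ 0) ∧ P = {α ∈ Φ | 0 < h α}

/-- The Weyl group: the subgroup of isometries generated by the root reflections. -/
noncomputable def weylGroup (Φ : Set V) : Subgroup (V ≃ₗᵢ[ℝ] V) :=
  Subgroup.closure {g | ∃ α ∈ Φ, g = rootReflection α}

/-- The inversion set `I(w) = Φ₊ ∩ w(Φ₋)`. -/
def invSet (P : Set V) (w : V ≃ₗᵢ[ℝ] V) : Set V := P ∩ (⇑w '' (-P))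

/-- A simple root: a positive root that is not the sum of two positive roots. -/
def IsSimpleRoot (P : Set V) (α : V) : Prop :=
  α ∈ P ∧ ¬∃ β ∈ P, ∃ γ ∈ P, α = β + γ

/-- The length of `w`: minimal length of a word in simple reflections for `w`. -/
noncomputable def wlen (P : Set V) (w : V ≃ₗᵢ[ℝ] V) : ℕ :=
  sInf {n | ∃ l : List V, (∀ α ∈ l, IsSimpleRoot P α) ∧ l.length = n ∧
    (l.map rootReflection).prod = w}

/-- Bruhat order. -/
def bruhatLE (Φ P : Set V) : (V ≃ₗᵢ[ℝ] V) → (V ≃ₗᵢ[ℝ] V) → Prop :=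
  Relation.ReflTransGen fun a b =>
    (∃ α ∈ Φ, b = rootReflection α * a) ∧ wlen P a < wlen P b

def bruhatLT (Φ P : Set V) (a b : V ≃ₗᵢ[ℝ] V) : Prop := bruhatLE Φ P a b ∧ a ≠ b

/-- The parabolic subgroup generated by reflections in the roots of `J`. -/
noncomputable def parabolic (J : Set V) : Subgroup (V ≃ₗᵢ[ℝ] V) :=
  Subgroup.closure {g | ∃ α ∈ J, g = rootReflection α}

/-- Minimal length representatives of the cosets `W_J\W`. -/
def minReps (Φ P J : Set V) : Set (V ≃ₗᵢ[ℝ] V) :=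
  {v | v ∈ weylGroup Φ ∧ ∀ u ∈ parabolic J, wlen P v ≤ wlen P (u * v)}

/-!
An inversion set `P ∩ w(-P)` is cut out by `α ↦ -f (w⁻¹ α)`, where `f` defines `P`. Conversely, a
functional `h` cutting out `I` does not vanish on `Φ`, and `I = P ∩ w(-P)` as soon as
`w(-P) = {h > 0}`; such a `w` exists because any two positive systems `{f > 0}`, `{g > 0}` are
Weyl-conjugate. Indeed `W` is finite, as it fixes `(span Φ)ᗮ` pointwise and permutes `Φ`, so we may
take `w ∈ W` maximising `g (w x)`, where `x` represents `f`. Since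
`w s_α x = w x - (2 f α / ⟪α, α⟫) • w α`, maximality gives `g (w α) > 0` for every `f`-positive
root `α`.
-/

section

omit [FiniteDimensional ℝ V]

theorem rootReflection_apply (α v : V) :
    rootReflection α v = v - (2 * ⟪v, α⟫ / ⟪α, α⟫) • α := by
  rw [rootReflection, Submodule.reflection_apply, Submodule.starProjection_orthogonal_val,
    Submodule.starProjection_singleton, real_inner_self_eq_norm_sq, real_inner_comm]
  match_scalars
  · ring
  · simp only [Algebra.algebraMap_self_apply]; ring

theorem rootReflection_apply_of_inner_eq_zero {α v : V} (h : ⟪v, α⟫ = 0) :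
    rootReflection α v = v :=
  Submodule.reflection_mem_subspace_eq_self
    (Submodule.mem_orthogonal_singleton_iff_inner_left.mpr h)

theorem rootReflection_rootReflection (α v : V) : rootReflection α (rootReflection α v) = v :=
  Submodule.reflection_reflection _ v

theorem rootReflection_mem_weylGroup {Φ : Set V} {α : V} (hα : α ∈ Φ) :
    rootReflection α ∈ weylGroup Φ :=
  Subgroup.subset_closure ⟨α, hα, rfl⟩

theorem weylGroup_apply_of_mem_orthogonal {Φ : Set V} {w : V ≃ₗᵢ[ℝ] V} (hw : w ∈ weylGroup Φ)
    {x : V} (hx : x ∈ (Submodule.span ℝ Φ)ᗮ) : w x = x := by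
  induction hw using Subgroup.closure_induction with
  | mem g hg =>
    obtain ⟨α, hα, rfl⟩ := hg
    exact rootReflection_apply_of_inner_eq_zero
      (Submodule.inner_left_of_mem_orthogonal (Submodule.subset_span hα) hx)
  | one => rfl
  | mul x y _ _ ihx ihy => simp [ihx, ihy]
  | inv x _ ih => simpa using (congrArg x.symm ih).symm

end

theorem eq_of_eqOn_of_mem_weylGroup {Φ : Set V} {w₁ w₂ : V ≃ₗᵢ[ℝ] V} (hw₁ : w₁ ∈ weylGroup Φ)
    (hw₂ : w₂ ∈ weylGroup Φ) (h : Set.EqOn w₁ w₂ Φ) : w₁ = w₂ := by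
  have := LinearMap.ext_on_codisjoint (f := (w₁.toLinearEquiv : V →ₗ[ℝ] V))
    (g := (w₂.toLinearEquiv : V →ₗ[ℝ] V)) (Submodule.span ℝ Φ).isCompl_orthogonal.codisjoint
    (LinearMap.eqOn_span' h) fun x hx => by
      simp [weylGroup_apply_of_mem_orthogonal hw₁ hx, weylGroup_apply_of_mem_orthogonal hw₂ hx]
  ext x
  exact LinearMap.congr_fun this x

namespace IsRootSystem

variable {Φ : Set V} (hΦ : IsRootSystem Φ)
include hΦ

section

omit [FiniteDimensional ℝ V]

theorem neg_mem {α : V} (hα : α ∈ Φ) : -α ∈ Φ := by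
  simpa [rootReflection, Submodule.reflection_orthogonalComplement_singleton_eq_neg]
    using hΦ.reflect_mem α hα α hα

theorem apply_mem_iff {w : V ≃ₗᵢ[ℝ] V} (hw : w ∈ weylGroup Φ) (β : V) : w β ∈ Φ ↔ β ∈ Φ := by
  induction hw using Subgroup.closure_induction generalizing β with
  | mem g hg =>
    obtain ⟨α, hα, rfl⟩ := hg
    refine ⟨fun h => ?_, hΦ.reflect_mem α hα β⟩
    simpa only [rootReflection_rootReflection] using hΦ.reflect_mem α hα _ h
  | one => rfl
  | mul x y _ _ ihx ihy => exact (ihx _).trans (ihy β)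
  | inv x _ ih => simpa using (ih (x⁻¹ β)).symm

theorem symm_apply_mem_iff {w : V ≃ₗᵢ[ℝ] V} (hw : w ∈ weylGroup Φ) (β : V) :
    w.symm β ∈ Φ ↔ β ∈ Φ := by
  simpa [LinearIsometryEquiv.coe_inv] using hΦ.apply_mem_iff (inv_mem hw) β

theorem neg_setOf_pos (f : V →ₗ[ℝ] ℝ) : -{α ∈ Φ | 0 < f α} = {α ∈ Φ | 0 < (-f) α} := by
  ext β
  exact ⟨fun ⟨hβ, hfβ⟩ => ⟨by simpa using hΦ.neg_mem hβ, by simpa using hfβ⟩,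
    fun ⟨hβ, hfβ⟩ => ⟨hΦ.neg_mem hβ, by simpa using hfβ⟩⟩

theorem image_setOf {w : V ≃ₗᵢ[ℝ] V} (hw : w ∈ weylGroup Φ) (p : V → Prop) :
    ⇑w '' {α ∈ Φ | p α} = {α ∈ Φ | p (w.symm α)} := by
  ext β
  simp [LinearIsometryEquiv.image_eq_preimage_symm, hΦ.symm_apply_mem_iff hw]

theorem image_setOf_pos_eq_of_forall_pos {w : V ≃ₗᵢ[ℝ] V} (hw : w ∈ weylGroup Φ)
    {f g : V →ₗ[ℝ] ℝ} (hf : ∀ α ∈ Φ, f α ≠ 0) (hfg : ∀ α ∈ Φ, 0 < f α → 0 < g (w α)) :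
    ⇑w '' {α ∈ Φ | 0 < f α} = {α ∈ Φ | 0 < g α} := by
  refine subset_antisymm ?_ fun β ⟨hβ, hgβ⟩ => ?_
  · rintro _ ⟨α, ⟨hα, hfα⟩, rfl⟩
    exact ⟨(hΦ.apply_mem_iff hw α).mpr hα, hfg α hα hfα⟩
  · have hα : w.symm β ∈ Φ := (hΦ.symm_apply_mem_iff hw β).mpr hβ
    refine ⟨w.symm β, ⟨hα, (hf _ hα).lt_or_gt.resolve_left fun hneg => ?_⟩, w.apply_symm_apply β⟩
    have := hfg _ (hΦ.neg_mem hα) (by simpa using hneg)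
    simp only [map_neg, LinearIsometryEquiv.apply_symm_apply] at this
    linarith

theorem ne_zero_of_ne_zero_of_pos {f g : V →ₗ[ℝ] ℝ} (hf : ∀ α ∈ Φ, f α ≠ 0)
    (hfg : ∀ α ∈ Φ, 0 < f α → g α ≠ 0) : ∀ α ∈ Φ, g α ≠ 0 := by
  intro α hα
  rcases (hf α hα).lt_or_gt with hneg | hpos
  · simpa using hfg (-α) (hΦ.neg_mem hα) (by simpa using hneg)
  · exact hfg α hα hpos

theorem invSet_setOf_pos {w : V ≃ₗᵢ[ℝ] V} (hw : w ∈ weylGroup Φ) (f : V →ₗ[ℝ] ℝ) :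
    invSet {α ∈ Φ | 0 < f α} w = {α ∈ {α ∈ Φ | 0 < f α} | 0 < (-f) (w.symm α)} := by
  rw [invSet, hΦ.neg_setOf_pos, hΦ.image_setOf hw]
  ext α
  simp only [Set.mem_inter_iff, Set.mem_ofPred_eq]
  tauto

theorem diff_invSet_setOf_pos {w : V ≃ₗᵢ[ℝ] V} (hw : w ∈ weylGroup Φ) {f : V →ₗ[ℝ] ℝ}
    (hf : ∀ α ∈ Φ, f α ≠ 0) :
    {α ∈ Φ | 0 < f α} \ invSet {α ∈ Φ | 0 < f α} w =
      {α ∈ {α ∈ Φ | 0 < f α} | (-f) (w.symm α) < 0} := by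
  rw [hΦ.invSet_setOf_pos hw f]
  ext α
  simp only [Set.mem_sdiff, Set.mem_ofPred_eq, not_and]
  refine and_congr_right fun hα => ?_
  have hwα : (-f) (w.symm α) ≠ 0 := by
    simpa using hf _ ((hΦ.symm_apply_mem_iff hw α).mpr hα.1)
  rw [imp_iff_right hα, not_lt]
  exact ⟨fun h => h.lt_of_ne hwα, le_of_lt⟩

end

theorem finite_weylGroup : (weylGroup Φ : Set (V ≃ₗᵢ[ℝ] V)).Finite := by
  refine Set.Finite.of_finite_image (f := fun w (α : Φ) => w α) ?_
    fun w₁ hw₁ w₂ hw₂ h => eq_of_eqOn_of_mem_weylGroup hw₁ hw₂ fun α hα => congrFun h ⟨α, hα⟩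
  have : Finite Φ := hΦ.finite
  refine (Set.Finite.pi (t := fun _ : Φ => Φ) fun _ => hΦ.finite).subset ?_
  rintro _ ⟨w, hw, rfl⟩ α -
  exact (hΦ.apply_mem_iff hw α).mpr α.2

theorem exists_image_setOf_pos_eq {f g : V →ₗ[ℝ] ℝ} (hf : ∀ α ∈ Φ, f α ≠ 0)
    (hg : ∀ α ∈ Φ, g α ≠ 0) :
    ∃ w ∈ weylGroup Φ, ⇑w '' {α ∈ Φ | 0 < f α} = {α ∈ Φ | 0 < g α} := by
  obtain ⟨x, hx⟩ : ∃ x : V, ∀ v, ⟪x, v⟫ = f v :=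
    ⟨(InnerProductSpace.toDual ℝ V).symm (LinearMap.toContinuousLinearMap f),
      fun _ => InnerProductSpace.toDual_symm_apply⟩
  obtain ⟨w, hw, hmax⟩ := Set.exists_max_image _ (fun w : V ≃ₗᵢ[ℝ] V => g (w x))
    hΦ.finite_weylGroup ⟨1, one_mem _⟩
  refine ⟨w, hw, hΦ.image_setOf_pos_eq_of_forall_pos hw hf fun α hα hfα => ?_⟩
  have hc : 0 < 2 * ⟪x, α⟫ / ⟪α, α⟫ := by
    have := real_inner_self_pos.mpr (hΦ.ne_zero α hα)
    rw [hx]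
    positivity
  have hle := hmax _ (mul_mem hw (rootReflection_mem_weylGroup hα))
  simp only [LinearIsometryEquiv.coe_mul, Function.comp_apply, rootReflection_apply, map_sub,
    map_smul, smul_eq_mul, sub_le_self_iff] at hle
  exact ((mul_nonneg_iff_of_pos_left hc).mp hle).lt_of_ne
    (hg _ ((hΦ.apply_mem_iff hw α).mpr hα)).symm

end IsRootSystem

theorem inversion_set_iff_functional_general
    (Φ P : Set V) (hΦ : IsRootSystem Φ) (hP : IsPositiveSystem Φ P)
    (I : Set V) :
    (∃ w ∈ weylGroup Φ, I = invSet P w) ↔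
      ∃ h : V →ₗ[ℝ] ℝ, I = {α ∈ P | 0 < h α} ∧ P \ I = {α ∈ P | h α < 0} := by
  obtain ⟨f, hf, rfl⟩ := hP
  constructor
  · rintro ⟨w, hw, rfl⟩
    exact ⟨-f ∘ₗ (w.symm.toLinearEquiv : V →ₗ[ℝ] V), hΦ.invSet_setOf_pos hw f,
      hΦ.diff_invSet_setOf_pos hw hf⟩
  · rintro ⟨h, hI, hPI⟩
    have hh : ∀ α ∈ Φ, h α ≠ 0 := hΦ.ne_zero_of_ne_zero_of_pos hf fun α hα hfα hzero => by
      by_cases hαI : α ∈ I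
      · exact (hI ▸ hαI).2.ne' hzero
      · have : α ∈ {α ∈ Φ | 0 < f α} \ I := ⟨⟨hα, hfα⟩, hαI⟩
        exact (hPI ▸ this).2.ne hzero
    obtain ⟨w, hw, hwP⟩ := hΦ.exists_image_setOf_pos_eq (f := -f) (by simpa using hf) hh
    refine ⟨w, hw, ?_⟩
    rw [hI, invSet, hΦ.neg_setOf_pos, hwP]
    ext α
    simp only [Set.mem_inter_iff, Set.mem_ofPred_eq]
    tauto

/-- a subset of the positive roots is an inversion set iff it is
cut out by a linear functional. -/
theorem inversion_set_iff_functional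
    (Φ P : Set V) (hΦ : IsRootSystem Φ) (hP : IsPositiveSystem Φ P)
    (I : Set V) (hI : I ⊆ P) :
    (∃ w ∈ weylGroup Φ, I = invSet P w) ↔
      ∃ h : V →ₗ[ℝ] ℝ, I = {α ∈ P | 0 < h α} ∧ P \ I = {α ∈ P | h α < 0} :=
  inversion_set_iff_functional_general Φ P hΦ hP I
end

section
/- A permutation w ∈ S_n is fully commutative (i.e., any two reduced words for w are connected by commutations of non-adjacent simple transpositions) if and only if w avoids the pattern 321, i.e., there is no triple i < j < k with w(i) > w(j) > w(k). -/
/-- The product of the word `l` in the adjacent transpositions `s_i = (i, i+1)`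
of the symmetric group on `n+1` letters. -/
def wordProd {n : ℕ} (l : List (Fin n)) : Equiv.Perm (Fin (n + 1)) :=
  (l.map fun i => Equiv.swap i.castSucc i.succ).prod

/-- `l` is a reduced word for `w`. -/
def IsReducedWord {n : ℕ} (w : Equiv.Perm (Fin (n + 1))) (l : List (Fin n)) : Prop :=
  wordProd l = w ∧ ∀ l' : List (Fin n), wordProd l' = w → l.length ≤ l'.length

/-- One application of a commutation `s_i s_j = s_j s_i` with `|i − j| ≥ 2`. -/
def CommStep {n : ℕ} (l l' : List (Fin n)) : Prop :=
  ∃ (a b : List (Fin n)) (i j : Fin n), ((i : ℕ) + 2 ≤ (j : ℕ) ∨ (j : ℕ) + 2 ≤ (i : ℕ)) ∧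
    l = a ++ i :: j :: b ∧ l' = a ++ j :: i :: b

/-- `w` is fully commutative: any two reduced words are connected by commutations
of non-adjacent simple transpositions. -/
def FullyCommutative {n : ℕ} (w : Equiv.Perm (Fin (n + 1))) : Prop :=
  ∀ l l' : List (Fin n), IsReducedWord w l → IsReducedWord w l' →
    Relation.ReflTransGen CommStep l l'

/-!
The length of a permutation is its number of inversions, and `i` can begin a reduced word of `w`
exactly when it is a left descent of `w`, i.e. when the value `i + 1` stands to the left of the
value `i`; removing that descent deletes the single inversion between these two values.

If `w` avoids `321`, two reduced words beginning with `i` and `j` are connected by induction on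
the length: for `i = j` recurse, for `|i - j| ≥ 2` pass through a common reduced word beginning
with `i j`, resp. `j i`, and `|i - j| = 1` cannot happen, since descents at `i` and `i + 1` place
the values `i + 2, i + 1, i` in this order.

Conversely, commutations do not change the multiset of letters. A `321` with values `a > b > c`
survives the removal of a descent `v` with `b ≤ v < a` (if `a ≠ b + 1`) or `c ≤ v < b`
(if `b ≠ c + 1`), which reduces to consecutive values `c + 2, c + 1, c`. Then `w` has reduced
words beginning with `s_c s_{c+1} s_c` and, by the braid relation, with `s_{c+1} s_c s_{c+1}`,
which contain `s_c` a different number of times.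
-/

open Equiv Relation

lemma swap_mul_swap_mul_swap_braid {α : Type*} [DecidableEq α] {a b c : α} (hab : a ≠ b)
    (hac : a ≠ c) (hbc : b ≠ c) :
    swap a b * swap b c * swap a b = swap b c * swap a b * swap b c :=
  calc swap a b * swap b c * swap a b = swap b a * swap c b * swap b a := by
        rw [swap_comm a b, swap_comm b c]
    _ = swap c a := by rw [swap_mul_swap_mul_swap hbc.symm hac.symm, swap_comm]
    _ = swap b c * swap a b * swap b c := (swap_mul_swap_mul_swap hab hac).symm

section SimpleTransposition

variable {n : ℕ}

abbrev adjSwap (i : Fin n) : Perm (Fin (n + 1)) := swap i.castSucc i.succ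

lemma wordProd_nil : wordProd ([] : List (Fin n)) = 1 := rfl

lemma wordProd_cons (i : Fin n) (l : List (Fin n)) :
    wordProd (i :: l) = adjSwap i * wordProd l := rfl

lemma adjSwap_mul_comm {i j : Fin n} (h : (i : ℕ) + 2 ≤ j ∨ (j : ℕ) + 2 ≤ i) :
    adjSwap i * adjSwap j = adjSwap j * adjSwap i :=
  (Perm.disjoint_swap_swap (by simp [Fin.ext_iff]; omega)).commute.eq

lemma adjSwap_braid {i j : Fin n} (h : (j : ℕ) = i + 1) :
    adjSwap i * adjSwap j * adjSwap i = adjSwap j * adjSwap i * adjSwap j := by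
  have hij : j.castSucc = i.succ := Fin.ext (by simp [h])
  simp only [adjSwap, hij]
  exact swap_mul_swap_mul_swap_braid (by simp [Fin.ext_iff]) (by simp [Fin.ext_iff]; omega)
    (by simp [Fin.ext_iff]; omega)

end SimpleTransposition

section Inversions

variable {n : ℕ}

def inversions (w : Perm (Fin (n + 1))) : Finset (Fin (n + 1) × Fin (n + 1)) :=
  {p | p.1 < p.2 ∧ w p.2 < w p.1}

def invCount (w : Perm (Fin (n + 1))) : ℕ := (inversions w).card

def IsDescent (i : Fin n) (w : Perm (Fin (n + 1))) : Prop :=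
  w⁻¹ i.succ < w⁻¹ i.castSucc

variable {i : Fin n} {w : Perm (Fin (n + 1))}

lemma mem_inversions {p q : Fin (n + 1)} : (p, q) ∈ inversions w ↔ p < q ∧ w q < w p := by
  simp [inversions]

lemma not_isDescent_iff : ¬IsDescent i w ↔ w⁻¹ i.castSucc < w⁻¹ i.succ := by
  rw [IsDescent, not_lt, le_iff_lt_or_eq,
    or_iff_left (w⁻¹.injective.ne (Fin.castSucc_lt_succ (i := i)).ne)]

lemma isDescent_adjSwap_mul_iff : IsDescent i (adjSwap i * w) ↔ ¬IsDescent i w := by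
  rw [not_isDescent_iff, IsDescent, mul_inv_rev, swap_inv, Perm.mul_apply, Perm.mul_apply,
    swap_apply_left, swap_apply_right]

lemma isDescent_adjSwap_mul_of_far {j : Fin n} (hij : (i : ℕ) + 2 ≤ j ∨ (j : ℕ) + 2 ≤ i)
    (h : IsDescent j w) : IsDescent j (adjSwap i * w) := by
  rwa [IsDescent, mul_inv_rev, swap_inv, Perm.mul_apply, Perm.mul_apply,
    swap_apply_of_ne_of_ne (by simp [Fin.ext_iff]; omega) (by simp [Fin.ext_iff]; omega),
    swap_apply_of_ne_of_ne (by simp [Fin.ext_iff]; omega) (by simp [Fin.ext_iff]; omega)]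

lemma mem_inversions_adjSwap_mul (h : IsDescent i w) {p q : Fin (n + 1)} :
    (p, q) ∈ inversions (adjSwap i * w) ↔
      (p, q) ∈ inversions w ∧ ¬(w p = i.succ ∧ w q = i.castSucc) := by
  obtain ⟨x, rfl⟩ := w⁻¹.surjective p
  obtain ⟨y, rfl⟩ := w⁻¹.surjective q
  simp only [IsDescent, Perm.coe_inv] at h
  simp only [mem_inversions, Perm.mul_apply, Perm.coe_inv, apply_symm_apply]
  -- `swap i (i + 1)` preserves the order of any two values other than `i` and `i + 1`
  rw [swap_apply_def, swap_apply_def]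
  split_ifs <;> grind [Fin.lt_def, Fin.ext_iff]

lemma inversions_adjSwap_mul (h : IsDescent i w) :
    inversions (adjSwap i * w) = (inversions w).erase (w⁻¹ i.succ, w⁻¹ i.castSucc) := by
  ext ⟨p, q⟩
  rw [mem_inversions_adjSwap_mul h, Finset.mem_erase, and_comm]
  simp [Prod.ext_iff, eq_symm_apply]

lemma invCount_adjSwap_mul_of_isDescent (h : IsDescent i w) :
    invCount (adjSwap i * w) + 1 = invCount w := by
  rw [invCount, invCount, inversions_adjSwap_mul h]
  exact Finset.card_erase_add_one (mem_inversions.2 ⟨h, by simp⟩)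

lemma invCount_adjSwap_mul_of_not_isDescent (h : ¬IsDescent i w) :
    invCount (adjSwap i * w) = invCount w + 1 := by
  simpa only [swap_mul_self_mul, eq_comm] using
    invCount_adjSwap_mul_of_isDescent (isDescent_adjSwap_mul_iff.2 h)

lemma invCount_one : invCount (1 : Perm (Fin (n + 1))) = 0 := by
  rw [invCount, Finset.card_eq_zero, Finset.eq_empty_iff_forall_notMem]
  rintro ⟨p, q⟩ h
  exact lt_asymm (mem_inversions.1 h).1 (mem_inversions.1 h).2

lemma eq_one_of_forall_not_isDescent (h : ∀ i, ¬IsDescent i w) : w = 1 := by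
  have hmono : StrictMono ⇑w⁻¹ :=
    Fin.strictMono_iff_lt_succ.2 fun i => not_isDescent_iff.1 (h i)
  exact inv_eq_one.1 (Equiv.ext fun _ => hmono.apply_eq)

lemma exists_isDescent_between {x y : Fin (n + 1)} (hyx : y < x) (h : w⁻¹ x < w⁻¹ y) :
    ∃ v : Fin n, y ≤ v.castSucc ∧ v.succ ≤ x ∧ IsDescent v w := by
  by_contra! hc
  have hmono : MonotoneOn ⇑w⁻¹ (Set.Icc y x) := by
    refine monotoneOn_of_le_succ Set.ordConnected_Icc fun a ha hay hsa => ?_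
    obtain ⟨v, rfl⟩ := (Fin.exists_castSucc_eq (i := a)).2
      fun hlast => ha (hlast ▸ Fin.top_eq_last n ▸ isMax_top)
    rw [Fin.orderSucc_castSucc] at hsa ⊢
    exact not_lt.1 (hc v hay.1 hsa.2)
  exact (hmono ⟨le_rfl, hyx.le⟩ ⟨hyx.le, le_rfl⟩ hyx.le).not_gt h

end Inversions

section ReducedWords

variable {n : ℕ} {i : Fin n} {w : Perm (Fin (n + 1))}

lemma invCount_wordProd_le_length (l : List (Fin n)) : invCount (wordProd l) ≤ l.length := by
  induction l with
  | nil => simp [wordProd_nil, invCount_one]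
  | cons i l ih =>
    rw [wordProd_cons, List.length_cons]
    by_cases h : IsDescent i (wordProd l)
    · have := invCount_adjSwap_mul_of_isDescent h
      omega
    · have := invCount_adjSwap_mul_of_not_isDescent h
      omega

lemma exists_wordProd_eq_length_eq_invCount (w : Perm (Fin (n + 1))) :
    ∃ l : List (Fin n), wordProd l = w ∧ l.length = invCount w := by
  induction hN : invCount w generalizing w with
  | zero =>
    refine ⟨[], (eq_one_of_forall_not_isDescent fun i hi => ?_).symm, rfl⟩
    have := invCount_adjSwap_mul_of_isDescent hi
    omega
  | succ N ih =>
    obtain ⟨i, hi⟩ : ∃ i, IsDescent i w := by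
      by_contra! h
      rw [eq_one_of_forall_not_isDescent h, invCount_one] at hN
      omega
    have := invCount_adjSwap_mul_of_isDescent hi
    obtain ⟨l, hl, hlen⟩ := ih (adjSwap i * w) (by omega)
    exact ⟨i :: l, by rw [wordProd_cons, hl, swap_mul_self_mul], by simp [hlen]⟩

lemma isReducedWord_iff {l : List (Fin n)} :
    IsReducedWord w l ↔ wordProd l = w ∧ l.length = invCount w := by
  refine ⟨fun ⟨hl, hmin⟩ => ⟨hl, le_antisymm ?_ (hl ▸ invCount_wordProd_le_length l)⟩,
    fun ⟨hl, hlen⟩ => ⟨hl, fun l' hl' => hlen ▸ hl' ▸ invCount_wordProd_le_length l'⟩⟩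
  obtain ⟨m, hm, hmlen⟩ := exists_wordProd_eq_length_eq_invCount w
  exact hmlen ▸ hmin m hm

lemma exists_isReducedWord (w : Perm (Fin (n + 1))) : ∃ l : List (Fin n), IsReducedWord w l :=
  (exists_wordProd_eq_length_eq_invCount w).imp fun _ => isReducedWord_iff.2

lemma isReducedWord_cons_iff {l : List (Fin n)} :
    IsReducedWord w (i :: l) ↔ IsDescent i w ∧ IsReducedWord (adjSwap i * w) l := by
  have hword : adjSwap i * wordProd l = w ↔ wordProd l = adjSwap i * w := by
    rw [← eq_inv_mul_iff_mul_eq, swap_inv]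
  rw [isReducedWord_iff, isReducedWord_iff, wordProd_cons, hword, List.length_cons]
  by_cases h : IsDescent i w
  · have := invCount_adjSwap_mul_of_isDescent h
    simp only [h, true_and]
    exact and_congr_right fun _ => by omega
  · have := invCount_adjSwap_mul_of_not_isDescent h
    simp only [h, false_and, iff_false, not_and]
    intro hl
    have := invCount_wordProd_le_length l
    rw [hl] at this
    omega

end ReducedWords

section Commutation

variable {n : ℕ} {l l' : List (Fin n)}

lemma CommStep.symm (h : CommStep l l') : CommStep l' l := by
  obtain ⟨a, b, i, j, hij, rfl, rfl⟩ := h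
  exact ⟨a, b, j, i, hij.symm, rfl, rfl⟩

lemma CommStep.cons (i : Fin n) (h : CommStep l l') : CommStep (i :: l) (i :: l') := by
  obtain ⟨a, b, x, y, hxy, rfl, rfl⟩ := h
  exact ⟨i :: a, b, x, y, hxy, rfl, rfl⟩

lemma CommStep.perm (h : CommStep l l') : l.Perm l' := by
  obtain ⟨a, b, i, j, -, rfl, rfl⟩ := h
  exact (List.Perm.swap j i b).append_left a

lemma reflTransGen_commStep_symm (h : ReflTransGen CommStep l l') : ReflTransGen CommStep l' l := by
  induction h with
  | refl => rfl
  | tail _ hs ih => exact ih.head hs.symm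

lemma reflTransGen_commStep_cons (i : Fin n) (h : ReflTransGen CommStep l l') :
    ReflTransGen CommStep (i :: l) (i :: l') :=
  ReflTransGen.lift (List.cons i) (fun _ _ => CommStep.cons i) _ _ h

lemma perm_of_reflTransGen_commStep (h : ReflTransGen CommStep l l') : l.Perm l' := by
  induction h with
  | refl => rfl
  | tail _ hs ih => exact ih.trans hs.perm

end Commutation

section Pattern321

variable {n : ℕ} {i j : Fin n} {w : Perm (Fin (n + 1))}

def Contains321 (w : Perm (Fin (n + 1))) : Prop :=
  ∃ p q r : Fin (n + 1), p < q ∧ q < r ∧ w r < w q ∧ w q < w p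

lemma contains321_iff_exists_mem_inversions :
    Contains321 w ↔ ∃ p q r, (p, q) ∈ inversions w ∧ (q, r) ∈ inversions w := by
  simp only [Contains321, mem_inversions]
  constructor
  · rintro ⟨p, q, r, hpq, hqr, hrq, hqp⟩
    exact ⟨p, q, r, ⟨hpq, hqp⟩, hqr, hrq⟩
  · rintro ⟨p, q, r, ⟨hpq, hqp⟩, hqr, hrq⟩
    exact ⟨p, q, r, hpq, hqr, hrq, hqp⟩

lemma Contains321.of_adjSwap_mul (hi : IsDescent i w) (h : Contains321 (adjSwap i * w)) :
    Contains321 w := by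
  rw [contains321_iff_exists_mem_inversions, inversions_adjSwap_mul hi] at h
  obtain ⟨p, q, r, hpq, hqr⟩ := h
  exact contains321_iff_exists_mem_inversions.2
    ⟨p, q, r, Finset.mem_of_mem_erase hpq, Finset.mem_of_mem_erase hqr⟩

lemma contains321_of_isDescent_of_isDescent (hj : (j : ℕ) = i + 1) (hi : IsDescent i w)
    (hj' : IsDescent j w) : Contains321 w := by
  have hji : j.castSucc = i.succ := Fin.ext (by simp [hj])
  refine ⟨w⁻¹ j.succ, w⁻¹ i.succ, w⁻¹ i.castSucc, hji ▸ hj', hi, ?_, ?_⟩ <;>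
    simp [Fin.lt_def, hj]

theorem reflTransGen_commStep_of_not_contains321 (hw : ¬Contains321 w) {l l' : List (Fin n)}
    (hl : IsReducedWord w l) (hl' : IsReducedWord w l') : ReflTransGen CommStep l l' := by
  induction hN : invCount w generalizing w l l' with
  | zero =>
    rw [isReducedWord_iff, hN, List.length_eq_zero_iff] at hl hl'
    rw [hl.2, hl'.2]
  | succ N ih =>
    obtain _ | ⟨i, t⟩ := l
    · simp [isReducedWord_iff, hN] at hl
    obtain _ | ⟨j, t'⟩ := l'
    · simp [isReducedWord_iff, hN] at hl'
    obtain ⟨hi, ht⟩ := isReducedWord_cons_iff.1 hl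
    obtain ⟨hj, ht'⟩ := isReducedWord_cons_iff.1 hl'
    have hNi := invCount_adjSwap_mul_of_isDescent hi
    have hNj := invCount_adjSwap_mul_of_isDescent hj
    have hwi : ¬Contains321 (adjSwap i * w) := fun h => hw (h.of_adjSwap_mul hi)
    have hwj : ¬Contains321 (adjSwap j * w) := fun h => hw (h.of_adjSwap_mul hj)
    obtain rfl | hfar | hadj | hadj :
        i = j ∨ ((i : ℕ) + 2 ≤ j ∨ (j : ℕ) + 2 ≤ i) ∨ (j : ℕ) = i + 1 ∨ (i : ℕ) = j + 1 := by
      omega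
    · exact reflTransGen_commStep_cons i (ih hwi ht ht' (by omega))
    · obtain ⟨m, hm⟩ := exists_isReducedWord (adjSwap j * (adjSwap i * w))
      have hm' : IsReducedWord (adjSwap i * (adjSwap j * w)) m := by
        rwa [← mul_assoc, adjSwap_mul_comm hfar, mul_assoc]
      have hjm : IsReducedWord (adjSwap i * w) (j :: m) :=
        isReducedWord_cons_iff.2 ⟨isDescent_adjSwap_mul_of_far hfar hj, hm⟩
      have him : IsReducedWord (adjSwap j * w) (i :: m) :=
        isReducedWord_cons_iff.2 ⟨isDescent_adjSwap_mul_of_far hfar.symm hi, hm'⟩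
      have hti : ReflTransGen CommStep (i :: t) (i :: j :: m) :=
        reflTransGen_commStep_cons i (ih hwi ht hjm (by omega))
      have htj : ReflTransGen CommStep (j :: t') (j :: i :: m) :=
        reflTransGen_commStep_cons j (ih hwj ht' him (by omega))
      exact (hti.tail ⟨[], m, i, j, hfar, rfl, rfl⟩).trans (reflTransGen_commStep_symm htj)
    · exact absurd (contains321_of_isDescent_of_isDescent hadj hi hj) hw
    · exact absurd (contains321_of_isDescent_of_isDescent hadj hj hi) hw

lemma exists_isDescent_contains321_adjSwap_mul {p q r : Fin (n + 1)}
    (hpq : (p, q) ∈ inversions w) (hqr : (q, r) ∈ inversions w)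
    (hgap : (w p : ℕ) ≠ w q + 1 ∨ (w q : ℕ) ≠ w r + 1) :
    ∃ v, IsDescent v w ∧ Contains321 (adjSwap v * w) := by
  have key (v : Fin n) (hv : IsDescent v w) (hp : ¬(w p = v.succ ∧ w q = v.castSucc))
      (hq : ¬(w q = v.succ ∧ w r = v.castSucc)) : Contains321 (adjSwap v * w) :=
    contains321_iff_exists_mem_inversions.2 ⟨p, q, r,
      (mem_inversions_adjSwap_mul hv).2 ⟨hpq, hp⟩, (mem_inversions_adjSwap_mul hv).2 ⟨hqr, hq⟩⟩
  rw [mem_inversions] at hpq hqr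
  rcases hgap with hgap | hgap
  · obtain ⟨v, hqv, hvp, hv⟩ := exists_isDescent_between hpq.2 (w := w) (by simpa using hpq.1)
    refine ⟨v, hv, key v hv ?_ ?_⟩ <;>
      simp only [Fin.ext_iff, Fin.le_def, Fin.val_castSucc, Fin.val_succ] at * <;>
      omega
  · obtain ⟨v, hrv, hvq, hv⟩ := exists_isDescent_between (w := w) hqr.2 (by simpa using hqr.1)
    refine ⟨v, hv, key v hv ?_ ?_⟩ <;>
      simp only [Fin.ext_iff, Fin.le_def, Fin.lt_def, Fin.val_castSucc, Fin.val_succ] at * <;>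
      omega

lemma exists_isReducedWord_not_perm_of_consecutive {p q r : Fin (n + 1)} (hpq : p < q)
    (hqr : q < r) (hp : (w p : ℕ) = w r + 2) (hq : (w q : ℕ) = w r + 1) :
    ∃ l l' : List (Fin n), IsReducedWord w l ∧ IsReducedWord w l' ∧ ¬l.Perm l' := by
  have hn : (w r : ℕ) + 2 < n + 1 := hp ▸ (w p).isLt
  set i : Fin n := ⟨w r, by omega⟩
  set j : Fin n := ⟨w r + 1, by omega⟩
  have hr' : w⁻¹ i.castSucc = r := by rw [Perm.inv_eq_iff_eq]; ext; simp [i]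
  have hq' : w⁻¹ i.succ = q := by rw [Perm.inv_eq_iff_eq]; ext; simp [i, hq]
  have hp' : w⁻¹ j.succ = p := by rw [Perm.inv_eq_iff_eq]; ext; simp [j, hp]
  have hji : j.castSucc = i.succ := rfl
  have hij : i.castSucc ≠ j.succ := by simp [Fin.ext_iff, i, j]; omega
  have hji' : j.succ ≠ i.succ := by simp [Fin.ext_iff, i, j]
  have hcs : i.castSucc ≠ j.castSucc := by simp [Fin.ext_iff, i, j]
  have hsucc : swap j.castSucc j.succ i.succ = j.succ := hji ▸ swap_apply_left _ _
  have hi : IsDescent i w := by rwa [IsDescent, hq', hr']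
  have hj : IsDescent j (adjSwap i * w) := by
    rw [IsDescent, mul_inv_rev, swap_inv, Perm.mul_apply, Perm.mul_apply, hji, swap_apply_right,
      swap_apply_of_ne_of_ne hij.symm hji', hp', hr']
    exact hpq.trans hqr
  have hi' : IsDescent i (adjSwap j * (adjSwap i * w)) := by
    rw [IsDescent, mul_inv_rev, mul_inv_rev, swap_inv, swap_inv, Perm.mul_apply, Perm.mul_apply,
      Perm.mul_apply, Perm.mul_apply, hsucc, swap_apply_of_ne_of_ne hij.symm hji', hp',
      swap_apply_of_ne_of_ne hcs hij, swap_apply_left, hq']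
    exact hpq
  obtain ⟨m, hm⟩ := exists_isReducedWord (adjSwap i * (adjSwap j * (adjSwap i * w)))
  have hl : IsReducedWord w (i :: j :: i :: m) :=
    isReducedWord_cons_iff.2 ⟨hi,
      isReducedWord_cons_iff.2 ⟨hj, isReducedWord_cons_iff.2 ⟨hi', hm⟩⟩⟩
  have hl' : IsReducedWord w (j :: i :: j :: m) := by
    rw [isReducedWord_iff] at hl hm ⊢
    refine ⟨?_, hl.2⟩
    simp only [wordProd_cons, hm.1, ← mul_assoc]
    rw [← adjSwap_braid rfl]
    simp only [mul_assoc, swap_mul_self_mul]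
  refine ⟨_, _, hl, hl', fun hperm => ?_⟩
  have := hperm.count_eq i
  simp [Fin.ext_iff, i, j] at this

theorem exists_isReducedWord_not_perm_of_contains321 (hw : Contains321 w) :
    ∃ l l' : List (Fin n), IsReducedWord w l ∧ IsReducedWord w l' ∧ ¬l.Perm l' := by
  induction hN : invCount w generalizing w with
  | zero =>
    obtain ⟨p, q, r, hpq, -⟩ := contains321_iff_exists_mem_inversions.1 hw
    exact absurd hN (Finset.card_ne_zero_of_mem hpq)
  | succ N ih =>
    obtain ⟨p, q, r, hpq, hqr⟩ := contains321_iff_exists_mem_inversions.1 hw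
    by_cases hgap : (w p : ℕ) ≠ w q + 1 ∨ (w q : ℕ) ≠ w r + 1
    · obtain ⟨v, hv, hwv⟩ := exists_isDescent_contains321_adjSwap_mul hpq hqr hgap
      have := invCount_adjSwap_mul_of_isDescent hv
      obtain ⟨l, l', hl, hl', hperm⟩ := ih hwv (by omega)
      exact ⟨v :: l, v :: l', isReducedWord_cons_iff.2 ⟨hv, hl⟩,
        isReducedWord_cons_iff.2 ⟨hv, hl'⟩, fun h => hperm ((List.perm_cons v).1 h)⟩
    · rw [mem_inversions] at hpq hqr
      exact exists_isReducedWord_not_perm_of_consecutive hpq.1 hqr.1 (by omega) (by omega)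

end Pattern321

/-- a permutation is fully commutative iff it avoids the pattern `321`. -/
theorem fullyCommutative_iff_avoids_321 {n : ℕ} (w : Equiv.Perm (Fin (n + 1))) :
    FullyCommutative w ↔
      ¬ ∃ i j k : Fin (n + 1), i < j ∧ j < k ∧ w k < w j ∧ w j < w i := by
  refine ⟨fun hfc hw => ?_, fun hw _ _ => reflTransGen_commStep_of_not_contains321 hw⟩
  obtain ⟨l, l', hl, hl', hperm⟩ := exists_isReducedWord_not_perm_of_contains321 hw
  exact hperm (perm_of_reflTransGen_commStep (hfc l l' hl hl'))
end
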